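/- arXiv:2302.11354 — 2 statements merged into one kernel-verified Lean document; each statement's English description precedes it below -/
import Mathlib

section
/- Let Â : [t₀, t_N] → ℝ^{m} be a continuously differentiable path whose first coordinate is time, and let A_s denote its remaining coordinates. Any CDE of the form Z_t = Z_{t₀} + ∫ f(Z_s, A_s) dÂ_s with f jointly Lipschitz can be represented as a CDE of the form β_t = β_{t₀} + ∫ g(β_s) dÂ_s on the augmented state β_s = (Z_s, A_s), by taking g(β) = (f(Z, A), e) where e recovers dA_s from dÂ_s. -/
open Set Matrix

attribute [local instance] Matrix.frobeniusSeminormedAddCommGroup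
  Matrix.frobeniusNormedAddCommGroup Matrix.frobeniusNormedSpace

/-- Let `Ahat : [t₀, t_N] → ℝ^{m+1}` be a continuously differentiable path whose
first coordinate is time, and let `A s` denote its remaining coordinates.  Any
CDE `Z t = Z₀ + ∫ f (Z s, A s) dAhat_s` with `f` jointly Lipschitz can be
represented as a CDE `β t = β₀ + ∫ g (β s) dAhat_s` on the augmented state
`β s = (Z s, A s)`, taking `g β = (f β.1 β.2, E)` where the constant matrix `E`
recovers `dA_s` from `dAhat_s`. -/
theorem gncde_as_state_augmented_cde (m w : ℕ) (t₀ tN : ℝ) (ht : t₀ ≤ tN)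
    (Ahat Ahat' : ℝ → Fin (m + 1) → ℝ)
    (hAhat : ∀ s, HasDerivAt Ahat (Ahat' s) s) (hAhat' : Continuous Ahat')
    (hAhat0 : ∀ s, Ahat s 0 = s)
    (A : ℝ → Fin m → ℝ) (hA : ∀ s i, A s i = Ahat s i.succ)
    (f : (Fin w → ℝ) → (Fin m → ℝ) → Matrix (Fin w) (Fin (m + 1)) ℝ)
    (K : NNReal)
    (hf : LipschitzWith K (fun p : (Fin w → ℝ) × (Fin m → ℝ) => f p.1 p.2))
    (E : Matrix (Fin m) (Fin (m + 1)) ℝ)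
    (hE : ∀ i j, E i j = if j = i.succ then 1 else 0)
    (Z : ℝ → Fin w → ℝ) (hZc : ContinuousOn Z (Icc t₀ tN))
    (hZ : ∀ t ∈ Icc t₀ tN, Z t = Z t₀ + ∫ s in t₀..t, f (Z s) (A s) *ᵥ Ahat' s) :
    ∀ t ∈ Icc t₀ tN,
      ((Z t, A t) : (Fin w → ℝ) × (Fin m → ℝ)) =
        (Z t₀, A t₀) +
          ∫ s in t₀..t,
            ((f (Z s) (A s) *ᵥ Ahat' s, E *ᵥ Ahat' s) : (Fin w → ℝ) × (Fin m → ℝ)) := by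
  intro t htt
  have hAhatc : Continuous Ahat :=
    continuous_iff_continuousAt.2 fun s => (hAhat s).continuousAt
  have hAeq : A = fun s i => Ahat s i.succ := by funext s i; exact hA s i
  have hAcont : Continuous A := by
    rw [hAeq]
    exact continuous_pi fun i => (continuous_apply _).comp hAhatc
  have hAderiv : ∀ s : ℝ, HasDerivAt A (fun i => Ahat' s i.succ) s := by
    intro s
    rw [hasDerivAt_pi]
    intro i
    have h := (hasDerivAt_pi.mp (hAhat s)) i.succ
    simpa [hA] using h
  have hEmul : ∀ s : ℝ, E *ᵥ Ahat' s = fun i => Ahat' s i.succ := by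
    intro s
    funext i
    simp [Matrix.mulVec, dotProduct, hE]
  -- second-component integrand continuity & integrability
  have hg2c : Continuous fun s => E *ᵥ Ahat' s := by
    simp only [hEmul]
    exact continuous_pi fun i => (continuous_apply _).comp hAhat'
  have hg2int : IntervalIntegrable (fun s => E *ᵥ Ahat' s) MeasureTheory.volume t₀ t :=
    hg2c.intervalIntegrable _ _
  -- first-component integrand continuity on Icc & integrability
  have hsub : uIcc t₀ t ⊆ Icc t₀ tN := by
    rw [uIcc_of_le htt.1]
    exact Icc_subset_Icc le_rfl htt.2
  have hfc : Continuous fun p : (Fin w → ℝ) × (Fin m → ℝ) => f p.1 p.2 := hf.continuous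
  have hM : ContinuousOn (fun s => f (Z s) (A s)) (uIcc t₀ t) :=
    hfc.comp_continuousOn ((hZc.mono hsub).prodMk hAcont.continuousOn)
  have hg1c : ContinuousOn (fun s => f (Z s) (A s) *ᵥ Ahat' s) (uIcc t₀ t) := by
    apply continuousOn_pi.2
    intro i
    simp only [Matrix.mulVec, dotProduct]
    apply continuousOn_finset_sum
    intro j _
    exact (((continuous_apply j).comp (continuous_apply i)).comp_continuousOn hM).mul
      (((continuous_apply j).comp hAhat').continuousOn)
  have hg1int : IntervalIntegrable (fun s => f (Z s) (A s) *ᵥ Ahat' s)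
      MeasureTheory.volume t₀ t := hg1c.intervalIntegrable
  -- FTC for A
  have hA2 : A t = A t₀ + ∫ s in t₀..t, E *ᵥ Ahat' s := by
    have := intervalIntegral.integral_eq_sub_of_hasDerivAt
      (f := A) (f' := fun s i => Ahat' s i.succ)
      (fun s _ => hAderiv s) (by simpa only [hEmul] using hg2int)
    simp only [hEmul]
    rw [this]
    abel
  -- split the product integral
  have hpc : ContinuousOn
      (fun s => ((f (Z s) (A s) *ᵥ Ahat' s, E *ᵥ Ahat' s) : (Fin w → ℝ) × (Fin m → ℝ)))
      (uIcc t₀ t) := hg1c.prodMk hg2c.continuousOn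
  have hpint : IntervalIntegrable
      (fun s => ((f (Z s) (A s) *ᵥ Ahat' s, E *ᵥ Ahat' s) : (Fin w → ℝ) × (Fin m → ℝ)))
      MeasureTheory.volume t₀ t := hpc.intervalIntegrable
  have h1 := (ContinuousLinearMap.fst ℝ (Fin w → ℝ) (Fin m → ℝ)).intervalIntegral_comp_comm hpint
  have h2 := (ContinuousLinearMap.snd ℝ (Fin w → ℝ) (Fin m → ℝ)).intervalIntegral_comp_comm hpint
  have hsplit : (∫ s in t₀..t,
      ((f (Z s) (A s) *ᵥ Ahat' s, E *ᵥ Ahat' s) : (Fin w → ℝ) × (Fin m → ℝ)))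
      = (∫ s in t₀..t, f (Z s) (A s) *ᵥ Ahat' s, ∫ s in t₀..t, E *ᵥ Ahat' s) := by
    ext1
    · simpa using h1.symm
    · simpa using h2.symm
  rw [hsplit, Prod.mk_add_mk, Prod.mk.injEq]
  exact ⟨hZ t htt, hA2⟩
end

section
/- Let X, Y : [t₀, t_N] → ℝ^v be continuously differentiable driving paths and f : ℝ^w → ℝ^{w×v} be bounded by B and globally L-Lipschitz. If Z and W solve the respective CDEs dZ = f(Z) dX and dW = f(W) dY with Z_{t₀} = W_{t₀} and ‖X'(s) − Y'(s)‖ ≤ ε, ‖Y'(s)‖ ≤ M for all s, then ‖Z_t − W_t‖ ≤ (B ε / (L M)) · (e^{L M (t − t₀)} − 1) for all t ∈ [t₀, t_N]. -/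
/-!
Since `Z' = f(Z) Y' + f(Z) (X' - Y')`, the solution `Z` is an approximate trajectory of the
ODE `W' = f(W) Y'(t)` solved by `W`, with defect of norm at most `B ε`. That vector field is
`L M`-Lipschitz in `W`, so Grönwall's inequality for approximate trajectories bounds
`‖Z t - W t‖` by `(B ε / (L M)) (e^{L M (t - t₀)} - 1)`.
-/

open Set Filter Topology

theorem hasDerivWithinAt_Ici_of_eq_add_integral {E : Type*} [NormedAddCommGroup E]
    [NormedSpace ℝ E] [CompleteSpace E] {F g : ℝ → E} {a b t : ℝ}
    (hg : ContinuousOn g (Icc a b)) (hF : ∀ x ∈ Icc a b, F x = F a + ∫ s in a..x, g s)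
    (ht : t ∈ Ico a b) : HasDerivWithinAt F (g t) (Ici t) t := by
  have hIcc : Icc a b ∈ 𝓝[≥] t := Icc_mem_nhdsGE_of_mem ht
  have hint : IntervalIntegrable g MeasureTheory.volume a t :=
    (hg.mono (uIcc_of_le ht.1 ▸ Icc_subset_Icc_right ht.2.le)).intervalIntegrable
  have hmeas : StronglyMeasurableAtFilter g (𝓝[>] t) :=
    (hg.stronglyMeasurableAtFilter_nhdsWithin measurableSet_Icc t).filter_mono
      (nhdsWithin_le_of_mem (nhdsWithin_mono _ Ioi_subset_Ici_self hIcc))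
  have hcont : ContinuousWithinAt g (Ioi t) t :=
    ((hg t (Ico_subset_Icc_self ht)).mono_of_mem_nhdsWithin hIcc).mono Ioi_subset_Ici_self
  exact ((intervalIntegral.integral_hasDerivWithinAt_right hint hmeas hcont).const_add
    (F a)).congr_of_eventuallyEq (eventuallyEq_of_mem hIcc hF) (hF t (Ico_subset_Icc_self ht))

theorem LipschitzWith.clm_apply_const {α 𝕜 E F : Type*} [PseudoMetricSpace α]
    [NontriviallyNormedField 𝕜] [SeminormedAddCommGroup E] [NormedSpace 𝕜 E]
    [SeminormedAddCommGroup F] [NormedSpace 𝕜 F] {K : NNReal} {f : α → E →L[𝕜] F}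
    (hf : LipschitzWith K f) (y : E) : LipschitzWith (K * ‖y‖₊) (fun x => f x y) :=
  LipschitzWith.of_dist_le_mul fun x x' => by
    rw [dist_eq_norm, ← sub_apply]
    calc ‖(f x - f x') y‖ ≤ ‖f x - f x'‖ * ‖y‖ := (f x - f x').le_opNorm y
      _ ≤ K * dist x x' * ‖y‖ := by
        gcongr
        exact dist_eq_norm (f x) (f x') ▸ hf.dist_le_mul x x'
      _ = ↑(K * ‖y‖₊) * dist x x' := by push_cast; ring

theorem cde_continuity_in_driving_path_general (v w : ℕ) (t₀ tN M B ε : ℝ)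
    (hM0 : 0 < M)
    (X' Y' : ℝ → Fin v → ℝ)
    (hX'c : ContinuousOn X' (Icc t₀ tN)) (hY'c : ContinuousOn Y' (Icc t₀ tN))
    (f : (Fin w → ℝ) → ((Fin v → ℝ) →L[ℝ] (Fin w → ℝ)))
    (hB : ∀ z, ‖f z‖ ≤ B) (L : NNReal) (hL : LipschitzWith L f) (hL0 : 0 < (L : ℝ))
    (hXY : ∀ s ∈ Icc t₀ tN, ‖X' s - Y' s‖ ≤ ε)
    (hM : ∀ s ∈ Icc t₀ tN, ‖Y' s‖ ≤ M)
    (Z W : ℝ → Fin w → ℝ)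
    (hZc : ContinuousOn Z (Icc t₀ tN)) (hWc : ContinuousOn W (Icc t₀ tN))
    (hZW0 : Z t₀ = W t₀)
    (hZ : ∀ t ∈ Icc t₀ tN, Z t = Z t₀ + ∫ s in t₀..t, f (Z s) (X' s))
    (hW : ∀ t ∈ Icc t₀ tN, W t = W t₀ + ∫ s in t₀..t, f (W s) (Y' s)) :
    ∀ t ∈ Icc t₀ tN,
      ‖Z t - W t‖ ≤ (B * ε / ((L : ℝ) * M)) * (Real.exp ((L : ℝ) * M * (t - t₀)) - 1) := by
  have hf : Continuous f := hL.continuous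
  have hZ' : ∀ t ∈ Ico t₀ tN, HasDerivWithinAt Z (f (Z t) (X' t)) (Ici t) t := fun _ =>
    hasDerivWithinAt_Ici_of_eq_add_integral ((hf.comp_continuousOn hZc).clm_apply hX'c) hZ
  have hW' : ∀ t ∈ Ico t₀ tN, HasDerivWithinAt W (f (W t) (Y' t)) (Ici t) t := fun _ =>
    hasDerivWithinAt_Ici_of_eq_add_integral ((hf.comp_continuousOn hWc).clm_apply hY'c) hW
  have hLip : ∀ t ∈ Ico t₀ tN,
      LipschitzOnWith (L * M.toNNReal) (fun z => f z (Y' t)) univ := fun t ht =>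
    ((hL.clm_apply_const (Y' t)).weaken (mul_le_mul_right (by
      simpa [← NNReal.coe_le_coe, hM0.le] using hM t (Ico_subset_Icc_self ht)) L)).lipschitzOnWith
  have hdefect : ∀ t ∈ Ico t₀ tN, dist (f (Z t) (X' t)) (f (Z t) (Y' t)) ≤ B * ε :=
    fun t ht => by
      rw [dist_eq_norm, ← map_sub]
      exact ((f (Z t)).le_opNorm _).trans (mul_le_mul (hB _) (hXY t (Ico_subset_Icc_self ht))
        (norm_nonneg _) ((norm_nonneg _).trans (hB (Z t))))
  have hLM : ((L * M.toNNReal : NNReal) : ℝ) = L * M := by simp [hM0.le]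
  intro t ht
  have h := dist_le_of_approx_trajectories_ODE_of_mem hLip hZc hZ' hdefect (fun _ _ => trivial)
    hWc hW' (fun t _ => (dist_self _).le) (fun _ _ => trivial) (dist_le_zero.2 hZW0) t ht
  rw [hLM, gronwallBound_of_K_ne_0 (by positivity), add_zero] at h
  simpa only [zero_mul, zero_add, dist_eq_norm] using h

/-- Continuity in the driving path for Neural CDEs: if `Z` and `W` solve
`dZ = f(Z) dX` and `dW = f(W) dY` (interpreted as ODEs via the derivatives
`X'`, `Y'` of the continuously differentiable paths) with the same initial
value, `f` bounded by `B` and `L`-Lipschitz, `‖X' s − Y' s‖ ≤ ε` and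
`‖Y' s‖ ≤ M`, then
`‖Z t − W t‖ ≤ (B ε / (L M)) (e^{L M (t − t₀)} − 1)` on `[t₀, t_N]`. -/
theorem cde_continuity_in_driving_path (v w : ℕ) (t₀ tN M B ε : ℝ) (ht : t₀ ≤ tN)
    (hε : 0 ≤ ε) (hB0 : 0 ≤ B) (hM0 : 0 < M)
    (X' Y' : ℝ → Fin v → ℝ)
    (hX'c : ContinuousOn X' (Icc t₀ tN)) (hY'c : ContinuousOn Y' (Icc t₀ tN))
    (f : (Fin w → ℝ) → ((Fin v → ℝ) →L[ℝ] (Fin w → ℝ)))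
    (hB : ∀ z, ‖f z‖ ≤ B) (L : NNReal) (hL : LipschitzWith L f) (hL0 : 0 < (L : ℝ))
    (hXY : ∀ s ∈ Icc t₀ tN, ‖X' s - Y' s‖ ≤ ε)
    (hM : ∀ s ∈ Icc t₀ tN, ‖Y' s‖ ≤ M)
    (Z W : ℝ → Fin w → ℝ)
    (hZc : ContinuousOn Z (Icc t₀ tN)) (hWc : ContinuousOn W (Icc t₀ tN))
    (hZW0 : Z t₀ = W t₀)
    (hZ : ∀ t ∈ Icc t₀ tN, Z t = Z t₀ + ∫ s in t₀..t, f (Z s) (X' s))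
    (hW : ∀ t ∈ Icc t₀ tN, W t = W t₀ + ∫ s in t₀..t, f (W s) (Y' s)) :
    ∀ t ∈ Icc t₀ tN,
      ‖Z t - W t‖ ≤ (B * ε / ((L : ℝ) * M)) * (Real.exp ((L : ℝ) * M * (t - t₀)) - 1) :=
  cde_continuity_in_driving_path_general v w t₀ tN M B ε hM0 X' Y' hX'c hY'c f hB L hL hL0 hXY hM Z
    W hZc hWc hZW0 hZ hW
end
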